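/- arXiv:2602.05371 — 2 statements merged into one kernel-verified Lean document; each statement's English description precedes it below -/
import Mathlib

section
/- Under the setting of the hinge least-squares objective V at a nondegenerate point θ with Newton direction p = θ_OLS − θ ≠ 0 and positive-definite partition blocks X₁ᵀX₁, X₂ᵀX₂, consider a backtracking line search with initial trial step μ₀ > 0 and backtracking parameter β ∈ (0,1) generating trial steps μ_t = μ₀βᵗ for t = 0, 1, 2, …. Then there exists t* ∈ ℕ such that V(θ + μ_{t*} p) < V(θ). Consequently, the backtracking line search terminates after finitely many trials with a step size μ* = μ₀β^{t*} > 0 yielding strict decrease of the objective. -/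
open Matrix Finset

noncomputable section

/-- Augmented feature vector `x̃ = (x, 1) ∈ ℝ^{d+1}`. -/
def aug {d : ℕ} (x : Fin d → ℝ) : Fin (d + 1) → ℝ := Fin.snoc x 1

/-- The hinge least-squares objective
`V(θ) = (1/2) Σⱼ (yⱼ − max(x̃ⱼᵀθ₁, x̃ⱼᵀθ₂))²`. -/
def hingeV {d N : ℕ} (x : Fin N → Fin d → ℝ) (y : Fin N → ℝ)
    (θ : (Fin (d + 1) → ℝ) × (Fin (d + 1) → ℝ)) : ℝ :=
  (1 / 2) * ∑ j, (y j - max (aug (x j) ⬝ᵥ θ.1) (aug (x j) ⬝ᵥ θ.2)) ^ 2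

/-- The partition set `S₁(θ) = {j : x̃ⱼᵀθ₁ ≥ x̃ⱼᵀθ₂}`. -/
def part1 {d N : ℕ} (x : Fin N → Fin d → ℝ)
    (θ : (Fin (d + 1) → ℝ) × (Fin (d + 1) → ℝ)) : Finset (Fin N) :=
  Finset.univ.filter fun j => aug (x j) ⬝ᵥ θ.1 ≥ aug (x j) ⬝ᵥ θ.2

/-- Design matrix whose rows are the augmented feature vectors `x̃ⱼᵀ` for `j ∈ S`. -/
def design {d N : ℕ} (x : Fin N → Fin d → ℝ) (S : Finset (Fin N)) :
    Matrix {j // j ∈ S} (Fin (d + 1)) ℝ :=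
  Matrix.of fun j => aug (x j.1)

/-- Response vector with entries `yⱼ` for `j ∈ S`. -/
def resp {N : ℕ} (y : Fin N → ℝ) (S : Finset (Fin N)) : {j // j ∈ S} → ℝ :=
  fun j => y j.1

/-- The OLS solution `(X_SᵀX_S)⁻¹ X_Sᵀ y_S` on the index set `S`. -/
def ols {d N : ℕ} (x : Fin N → Fin d → ℝ) (y : Fin N → ℝ) (S : Finset (Fin N)) :
    Fin (d + 1) → ℝ :=
  ((design x S)ᵀ * design x S)⁻¹.mulVec ((design x S)ᵀ.mulVec (resp y S))

open Filter Topology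

lemma ols_normal {d N : ℕ} (x : Fin N → Fin d → ℝ) (y : Fin N → ℝ) (S : Finset (Fin N))
    (hpd : ((design x S)ᵀ * design x S).PosDef) :
    ((design x S)ᵀ * design x S).mulVec (ols x y S) = (design x S)ᵀ.mulVec (resp y S) := by
  rw [ols, Matrix.mulVec_mulVec, Matrix.mul_nonsing_inv _ hpd.det_pos.ne'.isUnit, Matrix.one_mulVec]

lemma key_sum {d N : ℕ} (x : Fin N → Fin d → ℝ) (y : Fin N → ℝ) (S : Finset (Fin N))
    (hpd : ((design x S)ᵀ * design x S).PosDef) (θi : Fin (d+1) → ℝ) :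
    ∑ j ∈ S, (y j - aug (x j) ⬝ᵥ θi) * (aug (x j) ⬝ᵥ (ols x y S - θi))
      = (ols x y S - θi) ⬝ᵥ ((design x S)ᵀ * design x S).mulVec (ols x y S - θi) := by
  set X := design x S
  set e := ols x y S - θi with he
  have h1 : ∑ j ∈ S, (y j - aug (x j) ⬝ᵥ θi) * (aug (x j) ⬝ᵥ e)
      = (X.mulVec e) ⬝ᵥ (fun j => resp y S j - X.mulVec θi j) := by
    rw [dotProduct]
    rw [← Finset.sum_coe_sort S]
    refine Finset.sum_congr rfl fun j _ => ?_
    simp [X, design, resp, Matrix.mulVec, dotProduct_comm, mul_comm]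
  rw [h1]
  have h2 : (X.mulVec e) ⬝ᵥ (fun j => resp y S j - X.mulVec θi j)
      = e ⬝ᵥ Xᵀ.mulVec (fun j => resp y S j - X.mulVec θi j) := by
    rw [Matrix.dotProduct_mulVec, Matrix.vecMul_transpose]
  rw [h2]
  congr 1
  have : (fun j => resp y S j - X.mulVec θi j) = resp y S - X.mulVec θi := rfl
  rw [this, Matrix.mulVec_sub, ← ols_normal x y S hpd, Matrix.mulVec_mulVec] at *
  rw [← Matrix.mulVec_sub]

lemma quad_nonneg {d N : ℕ} {x : Fin N → Fin d → ℝ} {S : Finset (Fin N)}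
    (hpd : ((design x S)ᵀ * design x S).PosDef) (e : Fin (d+1) → ℝ) :
    0 ≤ e ⬝ᵥ ((design x S)ᵀ * design x S).mulVec e := by
  rcases eq_or_ne e 0 with rfl | he
  · simp
  · have := hpd.dotProduct_mulVec_pos he
    simpa using this.le

lemma quad_pos {d N : ℕ} {x : Fin N → Fin d → ℝ} {S : Finset (Fin N)}
    (hpd : ((design x S)ᵀ * design x S).PosDef) {e : Fin (d+1) → ℝ} (he : e ≠ 0) :
    0 < e ⬝ᵥ ((design x S)ᵀ * design x S).mulVec e := by
  have := hpd.dotProduct_mulVec_pos he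
  simpa using this

/-- At a nondegenerate point `θ` with positive-definite partition Gram
matrices and nonzero Newton direction `p = θ_OLS − θ`, a backtracking line search with
initial step `μ₀ > 0` and parameter `β ∈ (0,1)` generating trial steps `μ_t = μ₀βᵗ` finds,
after finitely many trials, some `t*` with `μ* = μ₀β^{t*} > 0` and
`V(θ + μ* p) < V(θ)`. -/
theorem stmt_5 {d N : ℕ} (x : Fin N → Fin d → ℝ) (y : Fin N → ℝ)
    (θ : (Fin (d + 1) → ℝ) × (Fin (d + 1) → ℝ))
    (hnd : ∀ j, aug (x j) ⬝ᵥ θ.1 ≠ aug (x j) ⬝ᵥ θ.2)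
    (hpd1 : ((design x (part1 x θ))ᵀ * design x (part1 x θ)).PosDef)
    (hpd2 : ((design x (part1 x θ)ᶜ)ᵀ * design x (part1 x θ)ᶜ).PosDef)
    (θOLS : (Fin (d + 1) → ℝ) × (Fin (d + 1) → ℝ))
    (hOLS : θOLS = (ols x y (part1 x θ), ols x y (part1 x θ)ᶜ))
    (hne : θOLS - θ ≠ 0)
    (μ₀ : ℝ) (hμ₀ : 0 < μ₀) (β : ℝ) (hβ : β ∈ Set.Ioo (0 : ℝ) 1) :
    ∃ t : ℕ, 0 < μ₀ * β ^ t ∧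
      hingeV x y (θ + (μ₀ * β ^ t) • (θOLS - θ)) < hingeV x y θ := by
  obtain ⟨hβ0, hβ1⟩ := hβ
  set p := θOLS - θ with hp
  set S := part1 x θ with hS
  -- abbreviations
  set A1 : Fin N → ℝ := fun j => aug (x j) ⬝ᵥ θ.1 with hA1
  set A2 : Fin N → ℝ := fun j => aug (x j) ⬝ᵥ θ.2 with hA2
  set B1 : Fin N → ℝ := fun j => aug (x j) ⬝ᵥ p.1 with hB1
  set B2 : Fin N → ℝ := fun j => aug (x j) ⬝ᵥ p.2 with hB2
  set c : Fin N → ℝ := fun j => if j ∈ S then A1 j else A2 j with hc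
  set m : Fin N → ℝ := fun j => if j ∈ S then B1 j else B2 j with hm
  set F : ℝ → ℝ := fun μ => hingeV x y (θ + μ • p) with hF
  set Q : ℝ → ℝ := fun μ => (1 / 2) * ∑ j, (y j - (c j + μ * m j)) ^ 2 with hQ
  -- dot product expansion
  have hdot : ∀ (j : Fin N) (μ : ℝ), aug (x j) ⬝ᵥ (θ + μ • p).1 = A1 j + μ * B1 j ∧
      aug (x j) ⬝ᵥ (θ + μ • p).2 = A2 j + μ * B2 j := by
    intro j μ
    constructor <;>
    · simp only [Prod.fst_add, Prod.snd_add, Prod.smul_fst, Prod.smul_snd, dotProduct_add,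
        dotProduct_smul, smul_eq_mul, hA1, hA2, hB1, hB2]
  -- eventual equality F = Q near 0
  have hev : ∀ᶠ μ in 𝓝 (0 : ℝ), F μ = Q μ := by
    have hall : ∀ᶠ μ in 𝓝 (0 : ℝ), ∀ j : Fin N,
        max (aug (x j) ⬝ᵥ (θ + μ • p).1) (aug (x j) ⬝ᵥ (θ + μ • p).2) = c j + μ * m j := by
      rw [Filter.eventually_all]
      intro j
      rcases lt_or_gt_of_ne (hnd j) with h | h
      · -- A1 j < A2 j : j ∉ S
        have hjS : j ∉ S := by
          simp only [hS, part1, Finset.mem_filter, Finset.mem_univ, true_and]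
          exact not_le.2 h
        have hcont : Continuous fun μ : ℝ => (A2 j + μ * B2 j) - (A1 j + μ * B1 j) := by
          continuity
        have h0 : (0:ℝ) < (A2 j + 0 * B2 j) - (A1 j + 0 * B1 j) := by simpa using sub_pos.2 h
        have := hcont.continuousAt (x := (0:ℝ)) |>.eventually (eventually_gt_nhds h0)
        filter_upwards [this] with μ hμ
        rw [(hdot j μ).1, (hdot j μ).2, max_eq_right (by linarith)]
        show A2 j + μ * B2 j = (if j ∈ S then A1 j else A2 j) + μ * (if j ∈ S then B1 j else B2 j)
        rw [if_neg hjS, if_neg hjS]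
      · -- A1 j > A2 j : j ∈ S
        have hjS : j ∈ S := by
          simp only [hS, part1, Finset.mem_filter, Finset.mem_univ, true_and]
          exact le_of_lt h
        have hcont : Continuous fun μ : ℝ => (A1 j + μ * B1 j) - (A2 j + μ * B2 j) := by
          continuity
        have h0 : (0:ℝ) < (A1 j + 0 * B1 j) - (A2 j + 0 * B2 j) := by simpa using sub_pos.2 h
        have := hcont.continuousAt (x := (0:ℝ)) |>.eventually (eventually_gt_nhds h0)
        filter_upwards [this] with μ hμ
        rw [(hdot j μ).1, (hdot j μ).2, max_eq_left (by linarith)]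
        show A1 j + μ * B1 j = (if j ∈ S then A1 j else A2 j) + μ * (if j ∈ S then B1 j else B2 j)
        rw [if_pos hjS, if_pos hjS]
    filter_upwards [hall] with μ hμ
    simp only [hF, hingeV, hQ]
    congr 1
    exact Finset.sum_congr rfl fun j _ => by rw [hμ j]
  -- derivative of Q at 0
  set γ : ℝ := ∑ j, (y j - c j) * m j with hγ
  have hQd : HasDerivAt Q (-γ) 0 := by
    have h1 : ∀ j : Fin N, HasDerivAt (fun μ : ℝ => (y j - (c j + μ * m j)) ^ 2)
        (-(2 * (y j - c j) * m j)) 0 := by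
      intro j
      have hin : HasDerivAt (fun μ : ℝ => y j - (c j + μ * m j)) (-(m j)) 0 := by
        simpa using ((hasDerivAt_id (0:ℝ)).mul_const (m j)).const_add (c j) |>.const_sub (y j)
      have := hin.fun_pow 2
      simpa [mul_comm, mul_assoc, mul_left_comm] using this
    have hsum : HasDerivAt (fun μ : ℝ => ∑ j, (y j - (c j + μ * m j)) ^ 2)
        (∑ j, -(2 * (y j - c j) * m j)) 0 := HasDerivAt.fun_sum fun j _ => h1 j
    have := hsum.const_mul (1/2 : ℝ)
    convert this using 1
    · rfl
    · rfl
    rw [hγ, Finset.mul_sum, ← Finset.sum_neg_distrib]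
    exact Finset.sum_congr rfl fun j _ => by ring
  -- γ > 0
  have hγpos : 0 < γ := by
    have hsplit : γ = (∑ j ∈ S, (y j - A1 j) * B1 j) + ∑ j ∈ Sᶜ, (y j - A2 j) * B2 j := by
      rw [hγ, ← Finset.sum_add_sum_compl S]
      congr 1
      · exact Finset.sum_congr rfl fun j hj => by
          simp [hc, hm, Finset.mem_compl, hj]
      · refine Finset.sum_congr rfl fun j hj => ?_
        rw [Finset.mem_compl] at hj
        simp [hc, hm, hj]
    have hp1 : p.1 = ols x y S - θ.1 := by rw [hp, hOLS]; rfl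
    have hp2 : p.2 = ols x y Sᶜ - θ.2 := by rw [hp, hOLS]; rfl
    have k1 : ∑ j ∈ S, (y j - A1 j) * B1 j
        = (ols x y S - θ.1) ⬝ᵥ ((design x S)ᵀ * design x S).mulVec (ols x y S - θ.1) := by
      rw [← key_sum x y S hpd1 θ.1]
      exact Finset.sum_congr rfl fun j _ => by rw [hA1, hB1, hp1]
    have k2 : ∑ j ∈ Sᶜ, (y j - A2 j) * B2 j
        = (ols x y Sᶜ - θ.2) ⬝ᵥ ((design x Sᶜ)ᵀ * design x Sᶜ).mulVec (ols x y Sᶜ - θ.2) := by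
      rw [← key_sum x y Sᶜ hpd2 θ.2]
      exact Finset.sum_congr rfl fun j _ => by rw [hA2, hB2, hp2]
    have hne' : ols x y S - θ.1 ≠ 0 ∨ ols x y Sᶜ - θ.2 ≠ 0 := by
      by_contra hcon
      push_neg at hcon
      apply hne
      rw [Prod.ext_iff]
      constructor
      · rw [← hp1] at hcon; exact hcon.1
      · rw [← hp2] at hcon; exact hcon.2
    rw [hsplit, k1, k2]
    rcases hne' with h | h
    · exact add_pos_of_pos_of_nonneg (quad_pos hpd1 h) (quad_nonneg hpd2 _)
    · exact add_pos_of_nonneg_of_pos (quad_nonneg hpd1 _) (quad_pos hpd2 h)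
  -- F has derivative -γ at 0
  have hFd : HasDerivAt F (-γ) 0 := hQd.congr_of_eventuallyEq hev
  -- eventually F μ < F 0 for μ in 𝓝[>] 0
  have hslope : Tendsto (slope F 0) (𝓝[≠] 0) (𝓝 (-γ)) :=
    hasDerivAt_iff_tendsto_slope.1 hFd
  have hneg : ∀ᶠ μ in 𝓝[≠] (0:ℝ), slope F 0 μ < 0 :=
    hslope.eventually (eventually_lt_nhds (neg_neg_iff_pos.2 hγpos))
  have hneg' : ∀ᶠ μ in 𝓝[>] (0:ℝ), F μ < F 0 := by
    have hle : 𝓝[>] (0:ℝ) ≤ 𝓝[≠] 0 :=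
      nhdsWithin_mono _ fun μ hμ => ne_of_gt hμ
    filter_upwards [hle hneg, self_mem_nhdsWithin] with μ hs (hpos : 0 < μ)
    have h1 : μ⁻¹ * (F μ - F 0) < 0 := by simpa [slope, sub_zero] using hs
    have h2 := mul_neg_of_pos_of_neg hpos h1
    rw [mul_inv_cancel_left₀ (ne_of_gt hpos)] at h2
    linarith
  -- the sequence μ₀ β^t tends to 0 within (0, ∞)
  have htend : Tendsto (fun t : ℕ => μ₀ * β ^ t) atTop (𝓝[>] (0:ℝ)) := by
    rw [tendsto_nhdsWithin_iff]
    constructor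
    · have h := (tendsto_pow_atTop_nhds_zero_of_lt_one hβ0.le hβ1).const_mul μ₀
      rw [mul_zero] at h
      exact h
    · exact Eventually.of_forall fun t => mul_pos hμ₀ (pow_pos hβ0 t)
  obtain ⟨t, ht⟩ := (htend.eventually hneg').exists
  refine ⟨t, mul_pos hμ₀ (pow_pos hβ0 t), ?_⟩
  have h0 : θ + (0:ℝ) • p = θ := by simp
  calc hingeV x y (θ + (μ₀ * β ^ t) • p) = F (μ₀ * β ^ t) := rfl
    _ < F 0 := ht
    _ = hingeV x y θ := by show hingeV x y (θ + (0:ℝ) • p) = _; rw [h0]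
end
end

section
/- (Universal approximation with O(δ²) rate.) Let K ⊂ ℝᵈ be a compact set and g twice continuously differentiable on an open set containing K, with ‖∇²g(z)‖ ≤ M for z ∈ K and ‖(x, 1)‖₂ ≤ D_K for all x ∈ K. Fix δ > 0 and let {R_i}_{i=1}^{M'} be finitely many pairwise disjoint convex sets covering K, each with diameter at most δ, and with chosen centers c_i ∈ R_i. Suppose each region R_i contains training points x_{i,1},…,x_{i,N_i} with responses g(x_{i,j}), whose augmented design matrix X_i (rows (x_{i,j}, 1)ᵀ) satisfies λ_min(X_iᵀX_i) ≥ c·N_i for a constant c > 0. Define the piecewise linear function f on K by f(x) = ŵ_iᵀ(x, 1) for x ∈ R_i, where ŵ_i = (X_iᵀX_i)⁻¹X_iᵀy_i is the OLS solution in region i. Then with C = (M/2)(1 + D_K/√c), the uniform error bound sup_{x ∈ K} |f(x) − g(x)| ≤ C·δ² holds, where C does not depend on δ or on the partition. -/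
open Matrix

noncomputable section

/-- Augmented vector `(x, 1) ∈ ℝ^{d+1}` of a point `x ∈ ℝᵈ`. -/
def augE {d : ℕ} (v : EuclideanSpace ℝ (Fin d)) : Fin (d + 1) → ℝ :=
  Fin.snoc (fun i => v i) 1

/-- The Gram matrix `XᵀX` of a real matrix is Hermitian (symmetric). -/
lemma gramIsHermitian {m n : ℕ} (X : Matrix (Fin m) (Fin n) ℝ) :
    (Xᵀ * X).IsHermitian := by
  rw [← Matrix.conjTranspose_eq_transpose_of_trivial]
  exact Matrix.isHermitian_conjTranspose_mul_self X

lemma quad_lower {n : ℕ} {A : Matrix (Fin n) (Fin n) ℝ} (hA : A.IsHermitian) {μ : ℝ}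
    (hμ : ∀ k, μ ≤ hA.eigenvalues k) (z : Fin n → ℝ) :
    μ * (z ⬝ᵥ z) ≤ z ⬝ᵥ A *ᵥ z := by
  set U : Matrix (Fin n) (Fin n) ℝ := (hA.eigenvectorUnitary : Matrix (Fin n) (Fin n) ℝ) with hUdef
  have hUU : U * star U = 1 := (Matrix.mem_unitaryGroup_iff).mp hA.eigenvectorUnitary.2
  have hB : (A - μ • (1 : Matrix (Fin n) (Fin n) ℝ)).PosSemidef := by
    have h1 : A - μ • (1 : Matrix (Fin n) (Fin n) ℝ)
        = U * diagonal (fun k => hA.eigenvalues k - μ) * star U := by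
      conv_lhs => rw [hA.spectral_theorem, Unitary.conjStarAlgAut_apply]
      have h2 : μ • (1 : Matrix (Fin n) (Fin n) ℝ) = U * (μ • 1) * star U := by
        rw [Matrix.mul_smul, Matrix.smul_mul, mul_one, hUU]
      rw [h2, ← Matrix.sub_mul, ← Matrix.mul_sub]
      congr 2
      ext i j
      by_cases h : i = j <;>
        simp [Matrix.diagonal, h, Matrix.one_apply, RCLike.ofReal]
    rw [h1, Matrix.star_eq_conjTranspose]
    exact (posSemidef_diagonal_iff.mpr fun k => sub_nonneg.mpr (hμ k)).mul_mul_conjTranspose_same U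
  have h3 := hB.dotProduct_mulVec_nonneg z
  have hstar : star z = z := by simp
  rw [hstar, Matrix.sub_mulVec, Matrix.smul_mulVec, Matrix.one_mulVec,
    dotProduct_sub, dotProduct_smul] at h3
  have h4 : μ • (z ⬝ᵥ z) ≤ z ⬝ᵥ A *ᵥ z := by linarith [h3]
  simpa using h4

lemma taylor_aux {d : ℕ} {g : EuclideanSpace ℝ (Fin d) → ℝ}
    {U s : Set (EuclideanSpace ℝ (Fin d))} (hU : IsOpen U) (hg : ContDiffOn ℝ 2 g U)
    (hs : Convex ℝ s) (hsU : s ⊆ U) {M : ℝ}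
    (hM : ∀ z ∈ s, ‖fderiv ℝ (fderiv ℝ g) z‖ ≤ M)
    {c p : EuclideanSpace ℝ (Fin d)} (hc : c ∈ s) (hp : p ∈ s) :
    |g p - g c - fderiv ℝ g c (p - c)| ≤ M / 2 * ‖p - c‖ ^ 2 := by
  have hdiffAt : ∀ z ∈ U, DifferentiableAt ℝ g z := fun z hz =>
    (hg.contDiffAt (hU.mem_nhds hz)).differentiableAt two_ne_zero
  have hdiff' : ∀ z ∈ U, DifferentiableAt ℝ (fderiv ℝ g) z := fun z hz =>
    (((hg.contDiffAt (hU.mem_nhds hz)).fderiv_right (le_refl 2)).differentiableAt one_ne_zero)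
  have hLip : ∀ z ∈ s, ‖fderiv ℝ g z - fderiv ℝ g c‖ ≤ M * ‖z - c‖ := fun z hz =>
    hs.norm_image_sub_le_of_norm_fderiv_le (fun w hw => hdiff' w (hsU hw)) hM hc hz
  set u : EuclideanSpace ℝ (Fin d) := p - c with hu
  set γ : ℝ → EuclideanSpace ℝ (Fin d) := fun t => c + t • u with hγ
  have hγmem : ∀ t ∈ Set.Icc (0:ℝ) 1, γ t ∈ s := by
    intro t ht
    exact hs.add_smul_sub_mem hc hp ht
  set a : ℝ := fderiv ℝ g c u with ha
  set φ : ℝ → ℝ := fun t => g (γ t) - g c - t * a with hφ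
  set φ' : ℝ → ℝ := fun t => fderiv ℝ g (γ t) u - a with hφ'
  have hγderiv : ∀ t : ℝ, HasDerivAt γ u t := by
    intro t
    simpa [hγ] using ((hasDerivAt_id t).smul_const u).const_add c
  have hφderiv : ∀ t ∈ Set.Icc (0:ℝ) 1, HasDerivAt φ (φ' t) t := by
    intro t ht
    have h1 : HasDerivAt (fun t => g (γ t)) (fderiv ℝ g (γ t) u) t :=
      (hdiffAt (γ t) (hsU (hγmem t ht))).hasFDerivAt.comp_hasDerivAt t (hγderiv t)
    have := (h1.sub_const (g c)).sub ((hasDerivAt_id t).mul_const a)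
    simp only [id_eq, one_mul] at this
    exact this
  have hcont : ContinuousOn φ (Set.Icc (0:ℝ) 1) :=
    fun t ht => ((hφderiv t ht).continuousAt).continuousWithinAt
  have hder : ∀ t ∈ Set.Ico (0:ℝ) 1, HasDerivWithinAt φ (φ' t) (Set.Ici t) t :=
    fun t ht => (hφderiv t (Set.mem_Icc_of_Ico ht)).hasDerivWithinAt
  have h0 : ‖φ 0‖ ≤ M / 2 * ‖u‖ ^ 2 * (0:ℝ) ^ 2 := by simp [hφ, hγ]
  have hBd : ∀ t : ℝ, HasDerivAt (fun t : ℝ => M / 2 * ‖u‖ ^ 2 * t ^ 2)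
      (M * ‖u‖ ^ 2 * t) t := by
    intro t
    have : HasDerivAt (fun t : ℝ => M / 2 * ‖u‖ ^ 2 * t ^ 2)
        (M / 2 * ‖u‖ ^ 2 * (2 * t)) t := by
      simpa using (hasDerivAt_pow 2 t).const_mul (M / 2 * ‖u‖ ^ 2)
    convert this using 1
    ring
  have hbound : ∀ t ∈ Set.Ico (0:ℝ) 1, ‖φ' t‖ ≤ M * ‖u‖ ^ 2 * t := by
    intro t ht
    have ht0 : 0 ≤ t := ht.1
    have h2 : ‖φ' t‖ ≤ ‖fderiv ℝ g (γ t) - fderiv ℝ g c‖ * ‖u‖ := by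
      have he : φ' t = (fderiv ℝ g (γ t) - fderiv ℝ g c) u := by
        simp [hφ', ha]
      rw [he]
      exact (fderiv ℝ g (γ t) - fderiv ℝ g c).le_opNorm u
    have h3 : ‖fderiv ℝ g (γ t) - fderiv ℝ g c‖ ≤ M * (t * ‖u‖) := by
      have h4 := hLip (γ t) (hγmem t (Set.mem_Icc_of_Ico ht))
      have hγc : ‖γ t - c‖ = t * ‖u‖ := by
        simp [hγ, norm_smul, abs_of_nonneg ht0]
      rwa [hγc] at h4
    calc ‖φ' t‖ ≤ (M * (t * ‖u‖)) * ‖u‖ :=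
          h2.trans (mul_le_mul_of_nonneg_right h3 (norm_nonneg u))
      _ = M * ‖u‖ ^ 2 * t := by ring
  have h1 := image_norm_le_of_norm_deriv_right_le_deriv_boundary
    hcont hder h0 hBd hbound (x := 1) (by norm_num)
  have hcu : c + u = p := by rw [hu]; abel
  have hφ1 : φ 1 = g p - g c - a := by simp [hφ, hγ, hcu]
  rw [hφ1, Real.norm_eq_abs] at h1
  calc |g p - g c - fderiv ℝ g c (p - c)| = |g p - g c - a| := by rw [ha, hu]
    _ ≤ M / 2 * ‖u‖ ^ 2 * 1 ^ 2 := h1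
    _ = M / 2 * ‖p - c‖ ^ 2 := by rw [hu]; ring

lemma wstar_dot {d : ℕ} (φ : EuclideanSpace ℝ (Fin d) →L[ℝ] ℝ) (b : ℝ)
    (z : EuclideanSpace ℝ (Fin d)) :
    (Fin.snoc (fun k => φ (EuclideanSpace.single k 1)) b : Fin (d+1) → ℝ) ⬝ᵥ augE z
      = φ z + b := by
  have hz : ∑ k, z k • EuclideanSpace.single k (1:ℝ) = z := by
    simpa [EuclideanSpace.basisFun_apply, EuclideanSpace.basisFun_repr] using
      (EuclideanSpace.basisFun (Fin d) ℝ).sum_repr z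
  have hφz : φ z = ∑ k, φ (EuclideanSpace.single k (1:ℝ)) * z k := by
    conv_lhs => rw [← hz]
    rw [map_sum]
    refine Finset.sum_congr rfl fun k _ => ?_
    rw [_root_.map_smul, smul_eq_mul, mul_comm]
  rw [dotProduct, Fin.sum_univ_castSucc]
  simp only [augE, Fin.snoc_castSucc, Fin.snoc_last]
  rw [hφz]
  ring

lemma dot_self_nonneg {n : ℕ} (v : Fin n → ℝ) : 0 ≤ v ⬝ᵥ v :=
  Finset.sum_nonneg fun j _ => mul_self_nonneg _

lemma dot_cs {n : ℕ} (v w : Fin n → ℝ) : (v ⬝ᵥ w) ^ 2 ≤ (v ⬝ᵥ v) * (w ⬝ᵥ w) := by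
  have h := Finset.sum_mul_sq_le_sq_mul_sq Finset.univ v w
  simpa [dotProduct, pow_two, mul_self_nonneg] using
    (by simpa [pow_two] using h : (∑ i, v i * w i) ^ 2 ≤ (∑ i, v i ^ 2) * ∑ i, w i ^ 2)

/-- (Universal approximation with `O(δ²)` rate.) Let `K` be compact,
`g` twice continuously differentiable on an open set containing `K`, with Hessian norm
bounded by `M` on `K` and `‖(x,1)‖₂ ≤ D_K` on `K`. Partition `K` into finitely many
pairwise disjoint convex regions of diameter at most `δ` with chosen centers, each region
containing training points whose augmented design matrix satisfies
`λ_min(X_iᵀX_i) ≥ c₀·N_i`, and let `f` be the piecewise linear function given on each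
region by the local OLS fit. Then `sup_{x ∈ K} |f(x) − g(x)| ≤ C·δ²` with
`C = (M/2)(1 + D_K/√c₀)`, independent of `δ` and of the partition. -/
theorem stmt_14 {d : ℕ} (K : Set (EuclideanSpace ℝ (Fin d))) (hK : IsCompact K)
    (g : EuclideanSpace ℝ (Fin d) → ℝ)
    (U : Set (EuclideanSpace ℝ (Fin d))) (hU : IsOpen U) (hKU : K ⊆ U)
    (hg : ContDiffOn ℝ 2 g U)
    (M : ℝ) (hM : ∀ z ∈ K, ‖fderiv ℝ (fderiv ℝ g) z‖ ≤ M)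
    (DK : ℝ) (hDK : ∀ v ∈ K, Real.sqrt (augE v ⬝ᵥ augE v) ≤ DK)
    (δ : ℝ) (hδ : 0 < δ)
    (M' : ℕ) (R : Fin M' → Set (EuclideanSpace ℝ (Fin d)))
    (hconv : ∀ i, Convex ℝ (R i))
    (hdisj : Pairwise (Function.onFun Disjoint R))
    (hcover : (⋃ i, R i) = K)
    (hdiam : ∀ i, Metric.diam (R i) ≤ δ)
    (ctr : Fin M' → EuclideanSpace ℝ (Fin d)) (hctr : ∀ i, ctr i ∈ R i)
    (Np : Fin M' → ℕ) (hNp : ∀ i, 1 ≤ Np i)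
    (x : ∀ i, Fin (Np i) → EuclideanSpace ℝ (Fin d)) (hx : ∀ i j, x i j ∈ R i)
    (X : ∀ i, Matrix (Fin (Np i)) (Fin (d + 1)) ℝ) (hX : ∀ i j, X i j = augE (x i j))
    (c₀ : ℝ) (hc₀ : 0 < c₀)
    (hmin : ∀ i k, c₀ * Np i ≤ (gramIsHermitian (X i)).eigenvalues k)
    (y : ∀ i, Fin (Np i) → ℝ) (hy : ∀ i j, y i j = g (x i j))
    (w : Fin M' → Fin (d + 1) → ℝ)
    (hw : ∀ i, w i = ((X i)ᵀ * X i)⁻¹.mulVec ((X i)ᵀ.mulVec (y i)))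
    (f : EuclideanSpace ℝ (Fin d) → ℝ)
    (hf : ∀ i, ∀ v ∈ R i, f v = w i ⬝ᵥ augE v) :
    ∀ v ∈ K, |f v - g v| ≤ M / 2 * (1 + DK / Real.sqrt c₀) * δ ^ 2 := by
  intro v hv
  obtain ⟨i, hvi⟩ : ∃ i, v ∈ R i := Set.mem_iUnion.mp (hcover ▸ hv)
  have hRK : R i ⊆ K := fun z hz => hcover ▸ Set.mem_iUnion.mpr ⟨i, hz⟩
  set c := ctr i with hc
  have hcR : c ∈ R i := hctr i
  have hM0 : 0 ≤ M := le_trans (norm_nonneg (fderiv ℝ (fderiv ℝ g) v)) (hM v hv)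
  have hDK0 : 0 ≤ DK := le_trans (Real.sqrt_nonneg _) (hDK v hv)
  have hMs : ∀ z ∈ R i, ‖fderiv ℝ (fderiv ℝ g) z‖ ≤ M := fun z hz => hM z (hRK hz)
  have hbdd : Bornology.IsBounded (R i) := hK.isBounded.subset hRK
  have hdist : ∀ z ∈ R i, ‖z - c‖ ≤ δ := by
    intro z hz
    calc ‖z - c‖ = dist z c := (dist_eq_norm z c).symm
      _ ≤ Metric.diam (R i) := Metric.dist_le_diam_of_mem hbdd hz hcR
      _ ≤ δ := hdiam i
  set ε := M / 2 * δ ^ 2 with hε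
  have hε0 : 0 ≤ ε := mul_nonneg (by linarith) (sq_nonneg δ)
  set φc := fderiv ℝ g c with hφc
  have htay : ∀ z ∈ R i, |g z - g c - φc (z - c)| ≤ ε := by
    intro z hz
    have h1 := taylor_aux hU hg (hconv i) (fun q hq => hKU (hRK hq)) hMs hcR hz
    have h2 : ‖z - c‖ ^ 2 ≤ δ ^ 2 := pow_le_pow_left₀ (norm_nonneg _) (hdist z hz) 2
    calc |g z - g c - φc (z - c)| ≤ M / 2 * ‖z - c‖ ^ 2 := h1
      _ ≤ M / 2 * δ ^ 2 := mul_le_mul_of_nonneg_left h2 (by linarith)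
  set wst : Fin (d+1) → ℝ :=
    Fin.snoc (fun k => φc (EuclideanSpace.single k 1)) (g c - φc c) with hwst
  have hdot : ∀ z, wst ⬝ᵥ augE z = g c + φc (z - c) := by
    intro z
    rw [hwst, wstar_dot, map_sub]
    ring
  have haff : ∀ z ∈ R i, |g z - wst ⬝ᵥ augE z| ≤ ε := by
    intro z hz
    rw [hdot]
    have heq : g z - (g c + φc (z - c)) = g z - g c - φc (z - c) := by ring
    rw [heq]
    exact htay z hz
  have hherm : ((X i)ᵀ * X i).IsHermitian := gramIsHermitian (X i)
  have hn1 : (1:ℝ) ≤ (Np i : ℝ) := by exact_mod_cast hNp i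
  have hnpos : (0:ℝ) < (Np i : ℝ) := by linarith
  have hμpos : 0 < c₀ * (Np i : ℝ) := mul_pos hc₀ hnpos
  -- invertibility
  have hpd : ((X i)ᵀ * X i).PosDef := by
    refine Matrix.PosDef.of_dotProduct_mulVec_pos hherm fun zv hzv => ?_
    have h1 := quad_lower hherm (hmin i) zv
    have h2 : 0 < zv ⬝ᵥ zv :=
      lt_of_le_of_ne (dot_self_nonneg zv)
        (fun h => hzv (dotProduct_self_eq_zero.mp h.symm))
    have : star zv = zv := by simp
    rw [this]
    nlinarith
  have hdet : IsUnit ((X i)ᵀ * X i).det := isUnit_iff_ne_zero.mpr (ne_of_gt hpd.det_pos)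
  have hAinv : ((X i)ᵀ * X i)⁻¹ * ((X i)ᵀ * X i) = 1 := Matrix.nonsing_inv_mul _ hdet
  have hAinv' : ((X i)ᵀ * X i) * ((X i)ᵀ * X i)⁻¹ = 1 := Matrix.mul_nonsing_inv _ hdet
  set e : Fin (Np i) → ℝ := fun j => y i j - wst ⬝ᵥ augE (x i j) with he
  have heb : ∀ j, |e j| ≤ ε := by
    intro j
    have : e j = g (x i j) - wst ⬝ᵥ augE (x i j) := by rw [he]; simp [hy i j]
    rw [this]
    exact haff (x i j) (hx i j)
  have hyv : y i = X i *ᵥ wst + e := by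
    funext j
    have h1 : (X i *ᵥ wst) j = augE (x i j) ⬝ᵥ wst := by
      simp [Matrix.mulVec, hX i j]
    simp only [Pi.add_apply, h1, he]
    rw [dotProduct_comm]
    ring
  set zv : Fin (d+1) → ℝ := ((X i)ᵀ * X i)⁻¹ *ᵥ ((X i)ᵀ *ᵥ e) with hzv
  have hwdec : w i = wst + zv := by
    rw [hw i, hyv, Matrix.mulVec_add, Matrix.mulVec_add, Matrix.mulVec_mulVec,
      Matrix.mulVec_mulVec, Matrix.mul_assoc, hAinv, Matrix.one_mulVec, hzv]
  have hAz : ((X i)ᵀ * X i) *ᵥ zv = (X i)ᵀ *ᵥ e := by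
    rw [hzv, Matrix.mulVec_mulVec, hAinv', Matrix.one_mulVec]
  have hquad : zv ⬝ᵥ (((X i)ᵀ * X i) *ᵥ zv) = (X i *ᵥ zv) ⬝ᵥ (X i *ᵥ zv) := by
    rw [← Matrix.mulVec_mulVec, Matrix.dotProduct_mulVec, Matrix.vecMul_transpose]
  have hquad2 : zv ⬝ᵥ (((X i)ᵀ * X i) *ᵥ zv) = (X i *ᵥ zv) ⬝ᵥ e := by
    rw [hAz, Matrix.dotProduct_mulVec, Matrix.vecMul_transpose]
  set q := (X i *ᵥ zv) ⬝ᵥ (X i *ᵥ zv) with hq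
  have hq0 : 0 ≤ q := dot_self_nonneg _
  have hE : e ⬝ᵥ e ≤ (Np i : ℝ) * ε ^ 2 := by
    have h1 : ∀ j, e j * e j ≤ ε ^ 2 := by
      intro j
      calc e j * e j = |e j| * |e j| := (abs_mul_abs_self _).symm
        _ ≤ ε * ε := mul_self_le_mul_self (abs_nonneg _) (heb j)
        _ = ε ^ 2 := (pow_two ε).symm
    calc e ⬝ᵥ e = ∑ j, e j * e j := rfl
      _ ≤ ∑ _j : Fin (Np i), ε ^ 2 := Finset.sum_le_sum fun j _ => h1 j
      _ = (Np i : ℝ) * ε ^ 2 := by simp [mul_comm]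
  have hE0 : 0 ≤ e ⬝ᵥ e := dot_self_nonneg _
  have hCS : q ^ 2 ≤ q * (e ⬝ᵥ e) := by
    have h1 : q = (X i *ᵥ zv) ⬝ᵥ e := by rw [← hquad, hquad2]
    calc q ^ 2 = ((X i *ᵥ zv) ⬝ᵥ e) ^ 2 := by rw [h1]
      _ ≤ ((X i *ᵥ zv) ⬝ᵥ (X i *ᵥ zv)) * (e ⬝ᵥ e) := dot_cs _ _
      _ = q * (e ⬝ᵥ e) := by rw [hq]
  have hqE : q ≤ e ⬝ᵥ e := by nlinarith
  have hzz : zv ⬝ᵥ zv ≤ ε ^ 2 / c₀ := by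
    have h1 : c₀ * (Np i : ℝ) * (zv ⬝ᵥ zv) ≤ q := by
      have := quad_lower hherm (hmin i) zv
      rw [hquad] at this
      exact this
    have h2 : c₀ * (Np i : ℝ) * (zv ⬝ᵥ zv) ≤ (Np i : ℝ) * ε ^ 2 :=
      h1.trans (hqE.trans hE)
    have h4 : (Np i : ℝ) * (c₀ * (zv ⬝ᵥ zv)) ≤ (Np i : ℝ) * ε ^ 2 := by
      calc (Np i : ℝ) * (c₀ * (zv ⬝ᵥ zv)) = c₀ * (Np i : ℝ) * (zv ⬝ᵥ zv) := by ring
        _ ≤ _ := h2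
    have h3 : c₀ * (zv ⬝ᵥ zv) ≤ ε ^ 2 := le_of_mul_le_mul_left h4 hnpos
    rw [le_div_iff₀ hc₀]
    linarith [h3]
  have hsz : Real.sqrt (zv ⬝ᵥ zv) ≤ ε / Real.sqrt c₀ := by
    have h1 : ε / Real.sqrt c₀ = Real.sqrt (ε ^ 2 / c₀) := by
      rw [Real.sqrt_div (sq_nonneg ε), Real.sqrt_sq hε0]
    rw [h1]
    exact Real.sqrt_le_sqrt hzz
  have hzu : |zv ⬝ᵥ augE v| ≤ (ε / Real.sqrt c₀) * DK := by
    have h1 : (zv ⬝ᵥ augE v) ^ 2 ≤ (zv ⬝ᵥ zv) * (augE v ⬝ᵥ augE v) := dot_cs _ _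
    have h2 : |zv ⬝ᵥ augE v| ≤ Real.sqrt (zv ⬝ᵥ zv) * Real.sqrt (augE v ⬝ᵥ augE v) := by
      rw [← Real.sqrt_sq_eq_abs, ← Real.sqrt_mul (dot_self_nonneg zv)]
      exact Real.sqrt_le_sqrt h1
    refine h2.trans (mul_le_mul hsz (hDK v hv) (Real.sqrt_nonneg _)
      (div_nonneg hε0 (Real.sqrt_nonneg _)))
  have hfirst : |wst ⬝ᵥ augE v - g v| ≤ ε := by
    rw [abs_sub_comm]
    exact haff v hvi
  have hfv : f v - g v = (wst ⬝ᵥ augE v - g v) + zv ⬝ᵥ augE v := by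
    rw [hf i v hvi, hwdec, add_dotProduct]
    ring
  calc |f v - g v| ≤ |wst ⬝ᵥ augE v - g v| + |zv ⬝ᵥ augE v| := by
        rw [hfv]; exact abs_add_le _ _
    _ ≤ ε + (ε / Real.sqrt c₀) * DK := add_le_add hfirst hzu
    _ = M / 2 * (1 + DK / Real.sqrt c₀) * δ ^ 2 := by rw [hε]; ring
end
end
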